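/- Let H be a Hermitian matrix and v a unit vector such that H v = λ v + ε w for some λ∈ℝ, ε>0, and a unit vector w with w ⊥ v. Suppose H has exactly one eigenvalue λ_ε (counted with multiplicity) satisfying |λ − λ_ε| ≤ ε, and all other eigenvalues of H are at distance at least d>ε from λ. Then any unit eigenvector v_ε of H associated with λ_ε satisfies ‖ v_ε − Proj_v(v_ε) ‖ ≤ 2ε/(d − ε), where Proj_v denotes the orthogonal projection onto the span of v. -/

import Mathlib

/-!
Expand in an orthonormal eigenbasis `bᵢ` of `H` with eigenvalues `μᵢ`. Since `μ_{i₀}` is the only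
eigenvalue closer than `d` to `λ`, it is simple, so `v_ε` is a unit multiple of `b_{i₀}` and
`‖v_ε - ⟪v, v_ε⟫ v‖² = 1 - |⟪b_{i₀}, v⟫|² = ∑_{i ≠ i₀} |⟪bᵢ, v⟫|²`. Pairing `H v - λ v = ε w` with
`bᵢ` gives `(μᵢ - λ) ⟪bᵢ, v⟫ = ε ⟪bᵢ, w⟫`, so `d² ∑_{i ≠ i₀} |⟪bᵢ, v⟫|² ≤ ε² ‖w‖² = ε²`. Hence
the distance is at most `ε / d ≤ 2ε / (d - ε)`.
-/

open Matrix

open scoped InnerProductSpace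

section Eigenbasis

variable {𝕜 E ι : Type*} [RCLike 𝕜] [NormedAddCommGroup E] [InnerProductSpace 𝕜 E] [Fintype ι]
  {T : E →ₗ[𝕜] E} {b : OrthonormalBasis ι 𝕜 E} {μ : ι → ℝ}

theorem norm_sub_inner_smul_sq {v : E} (hv : ‖v‖ = 1) (u : E) :
    ‖u - ⟪v, u⟫_𝕜 • v‖ ^ 2 = ‖u‖ ^ 2 - ‖⟪v, u⟫_𝕜‖ ^ 2 := by
  rw [@norm_sub_sq 𝕜, inner_smul_right, norm_smul, hv, ← inner_conj_symm u v,
    RCLike.mul_conj, ← RCLike.ofReal_pow, RCLike.ofReal_re]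
  ring

theorem OrthonormalBasis.norm_sq_sub_norm_inner_sq [DecidableEq ι] (b : OrthonormalBasis ι 𝕜 E)
    (i₀ : ι) (x : E) :
    ‖x‖ ^ 2 - ‖⟪b i₀, x⟫_𝕜‖ ^ 2 = ∑ i ∈ Finset.univ.erase i₀, ‖⟪b i, x⟫_𝕜‖ ^ 2 := by
  rw [← b.sum_sq_norm_inner_right, ← Finset.add_sum_erase _ _ (Finset.mem_univ i₀),
    add_sub_cancel_left]

namespace LinearMap.IsSymmetric

theorem inner_eigenbasis_apply (hT : T.IsSymmetric) (hb : ∀ i, T (b i) = (μ i : 𝕜) • b i)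
    (i : ι) (x : E) : ⟪b i, T x⟫_𝕜 = μ i * ⟪b i, x⟫_𝕜 := by
  rw [← hT, hb, inner_smul_left, RCLike.conj_ofReal]

theorem inner_eigenbasis_eq_zero_of_ne (hT : T.IsSymmetric)
    (hb : ∀ i, T (b i) = (μ i : 𝕜) • b i) {u : E} {ν : ℝ} (hu : T u = (ν : 𝕜) • u) {i : ι}
    (hne : μ i ≠ ν) : ⟪b i, u⟫_𝕜 = 0 := by
  have h := hT.inner_eigenbasis_apply hb i u
  rw [hu, inner_smul_right] at h
  have hsub : ((μ i : 𝕜) - ν) * ⟪b i, u⟫_𝕜 = 0 := by linear_combination -h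
  exact (mul_eq_zero.1 hsub).resolve_left (sub_ne_zero.2 (by exact_mod_cast hne))

theorem norm_inner_eq_norm_inner_eigenbasis (hT : T.IsSymmetric)
    (hb : ∀ i, T (b i) = (μ i : 𝕜) • b i)
    {u : E} {i₀ : ι} (hu : T u = (μ i₀ : 𝕜) • u) (hu1 : ‖u‖ = 1)
    (hsimple : ∀ i, i ≠ i₀ → μ i ≠ μ i₀) (x : E) : ‖⟪x, u⟫_𝕜‖ = ‖⟪b i₀, x⟫_𝕜‖ := by
  have hu_eq : u = ⟪b i₀, u⟫_𝕜 • b i₀ := by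
    conv_lhs => rw [← b.sum_repr' u]
    refine Finset.sum_eq_single i₀ (fun i _ hi => ?_) (by simp)
    rw [hT.inner_eigenbasis_eq_zero_of_ne hb hu (hsimple i hi), zero_smul]
  have hc : ‖⟪b i₀, u⟫_𝕜‖ = 1 := by
    rw [← hu1, hu_eq, norm_smul, b.norm_eq_one, mul_one, ← hu_eq]
  rw [hu_eq, inner_smul_right, norm_mul, hc, one_mul, norm_inner_symm]

theorem sq_mul_sum_norm_inner_sq_le (hT : T.IsSymmetric) (hb : ∀ i, T (b i) = (μ i : 𝕜) • b i)
    (s : Finset ι) {lam d : ℝ} (hd : 0 ≤ d) (hfar : ∀ i ∈ s, d ≤ |lam - μ i|) (x : E) :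
    d ^ 2 * ∑ i ∈ s, ‖⟪b i, x⟫_𝕜‖ ^ 2 ≤ ‖T x - (lam : 𝕜) • x‖ ^ 2 := by
  have hcoord : ∀ i, ⟪b i, T x - (lam : 𝕜) • x⟫_𝕜 = ((μ i - lam : ℝ) : 𝕜) * ⟪b i, x⟫_𝕜 := by
    intro i
    rw [inner_sub_right, inner_smul_right, hT.inner_eigenbasis_apply hb]
    push_cast
    ring
  calc d ^ 2 * ∑ i ∈ s, ‖⟪b i, x⟫_𝕜‖ ^ 2
      ≤ ∑ i ∈ s, ‖⟪b i, T x - (lam : 𝕜) • x⟫_𝕜‖ ^ 2 := by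
        rw [Finset.mul_sum]
        gcongr with i hi
        rw [hcoord, norm_mul, RCLike.norm_ofReal, mul_pow, abs_sub_comm]
        gcongr
        exact hfar i hi
    _ ≤ ∑ i, ‖⟪b i, T x - (lam : 𝕜) • x⟫_𝕜‖ ^ 2 :=
        Finset.sum_le_sum_of_subset_of_nonneg s.subset_univ fun _ _ _ => by positivity
    _ = ‖T x - (lam : 𝕜) • x‖ ^ 2 := b.sum_sq_norm_inner_right _

theorem norm_sub_inner_smul_le_of_isolated (hT : T.IsSymmetric)
    (hb : ∀ i, T (b i) = (μ i : 𝕜) • b i) {u v : E} (hu1 : ‖u‖ = 1) (hv1 : ‖v‖ = 1) {i₀ : ι}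
    (hu : T u = (μ i₀ : 𝕜) • u) {lam d : ℝ} (hd : 0 < d) (hclose : |lam - μ i₀| < d)
    (hfar : ∀ i, i ≠ i₀ → d ≤ |lam - μ i|) :
    ‖u - ⟪v, u⟫_𝕜 • v‖ ≤ ‖T v - (lam : 𝕜) • v‖ / d := by
  classical
  have hsimple : ∀ i, i ≠ i₀ → μ i ≠ μ i₀ := fun i hi h => (hfar i hi).not_gt (h ▸ hclose)
  have hsq : (‖u - ⟪v, u⟫_𝕜 • v‖ * d) ^ 2 ≤ ‖T v - (lam : 𝕜) • v‖ ^ 2 := calc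
    (‖u - ⟪v, u⟫_𝕜 • v‖ * d) ^ 2 = d ^ 2 * (‖v‖ ^ 2 - ‖⟪b i₀, v⟫_𝕜‖ ^ 2) := by
      rw [mul_pow, norm_sub_inner_smul_sq hv1,
        hT.norm_inner_eq_norm_inner_eigenbasis hb hu hu1 hsimple, hu1, hv1]
      ring
    _ ≤ ‖T v - (lam : 𝕜) • v‖ ^ 2 := by
      rw [b.norm_sq_sub_norm_inner_sq]
      exact hT.sq_mul_sum_norm_inner_sq_le hb _ hd.le
        (fun i hi => hfar i (Finset.ne_of_mem_erase hi)) v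
  rw [le_div_iff₀ hd]
  exact le_of_sq_le_sq hsq (norm_nonneg _)

end LinearMap.IsSymmetric

end Eigenbasis

open WithLp (toLp)

theorem EuclideanSpace.norm_toLp_eq_sqrt_sum_normSq {ι : Type*} [Fintype ι] (x : ι → ℂ) :
    ‖(toLp 2 x : EuclideanSpace ℂ ι)‖ = √(∑ i, Complex.normSq (x i)) := by
  simp [EuclideanSpace.norm_eq, Complex.normSq_eq_norm_sq]

theorem perturbation_eigenvector_general
    {n : ℕ} (H : Matrix (Fin n) (Fin n) ℂ) (hH : H.IsHermitian)
    (v w : Fin n → ℂ) (lam ε d : ℝ) (hε : 0 < ε) (hd : ε < d)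
    (hv : ∑ i, Complex.normSq (v i) = 1)
    (hw : ∑ i, Complex.normSq (w i) = 1)
    (heq : H.mulVec v = (lam : ℂ) • v + (ε : ℂ) • w)
    -- exactly one eigenvalue (with multiplicity) within `ε` of `λ` …
    (i₀ : Fin n) (hclose : |lam - hH.eigenvalues i₀| ≤ ε)
    -- … and all others at distance at least `d` from `λ`
    (hfar : ∀ i : Fin n, i ≠ i₀ → d ≤ |lam - hH.eigenvalues i|)
    -- a unit eigenvector associated with `λ_ε`
    (vε : Fin n → ℂ)
    (hvε : ∑ i, Complex.normSq (vε i) = 1)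
    (heig : H.mulVec vε = ((hH.eigenvalues i₀ : ℝ) : ℂ) • vε) :
    Real.sqrt (∑ i, Complex.normSq
        (vε i - (∑ j, (starRingEnd ℂ) (v j) * vε j) * v i)) ≤
      2 * ε / (d - ε) := by
  have hT : (toEuclideanLin H).IsSymmetric := isSymmetric_toEuclideanLin_iff.2 hH
  have hb : ∀ i, toEuclideanLin H (hH.eigenvectorBasis i) =
      (hH.eigenvalues i : ℂ) • hH.eigenvectorBasis i := fun i =>
    congrArg (toLp 2) (hH.mulVec_eigenvectorBasis i)
  have hbound := hT.norm_sub_inner_smul_le_of_isolated hb (u := toLp 2 vε) (v := toLp 2 v)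
    (by rw [EuclideanSpace.norm_toLp_eq_sqrt_sum_normSq, hvε, Real.sqrt_one])
    (by rw [EuclideanSpace.norm_toLp_eq_sqrt_sum_normSq, hv, Real.sqrt_one])
    (congrArg (toLp 2) heig) (hε.trans hd) (hclose.trans_lt hd) hfar
  have hres : ‖toEuclideanLin H (toLp 2 v) - (lam : ℂ) • toLp 2 v‖ = ε := by
    change ‖toLp 2 (H *ᵥ v) - _‖ = ε
    rw [heq, WithLp.toLp_add, WithLp.toLp_smul, WithLp.toLp_smul, add_sub_cancel_left, norm_smul,
      EuclideanSpace.norm_toLp_eq_sqrt_sum_normSq, hw, Real.sqrt_one, mul_one, Complex.norm_real,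
      Real.norm_of_nonneg hε.le]
  have hinner : ∑ j, (starRingEnd ℂ) (v j) * vε j = ⟪toLp 2 v, toLp 2 vε⟫_ℂ := by
    simp [EuclideanSpace.inner_toLp_toLp, dotProduct, mul_comm]
  rw [hinner, ← EuclideanSpace.norm_toLp_eq_sqrt_sum_normSq]
  calc _ ≤ ε / d := hres ▸ hbound
    _ ≤ ε / (d - ε) := div_le_div_of_nonneg_left hε.le (by linarith) (by linarith)
    _ ≤ 2 * ε / (d - ε) := by gcongr; linarith

/-- **Proposition A.1 (2), Benaych-Georges and Péché**: if `H` is Hermitian, `v` a unit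
vector with `H v = λ v + ε w` for a unit vector `w ⊥ v`, and `H` has exactly one
eigenvalue `λ_ε` (counted with multiplicity) with `|λ - λ_ε| ≤ ε` while all other
eigenvalues are at distance at least `d > ε` from `λ`, then any unit eigenvector `v_ε`
of `H` associated with `λ_ε` satisfies `‖v_ε - Proj_v(v_ε)‖ ≤ 2ε/(d - ε)`. -/
theorem perturbation_eigenvector
    {n : ℕ} (H : Matrix (Fin n) (Fin n) ℂ) (hH : H.IsHermitian)
    (v w : Fin n → ℂ) (lam ε d : ℝ) (hε : 0 < ε) (hd : ε < d)
    (hv : ∑ i, Complex.normSq (v i) = 1)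
    (hw : ∑ i, Complex.normSq (w i) = 1)
    (horth : ∑ i, (starRingEnd ℂ) (w i) * v i = 0)
    (heq : H.mulVec v = (lam : ℂ) • v + (ε : ℂ) • w)
    -- exactly one eigenvalue (with multiplicity) within `ε` of `λ` …
    (i₀ : Fin n) (hclose : |lam - hH.eigenvalues i₀| ≤ ε)
    -- … and all others at distance at least `d` from `λ`
    (hfar : ∀ i : Fin n, i ≠ i₀ → d ≤ |lam - hH.eigenvalues i|)
    -- a unit eigenvector associated with `λ_ε`
    (vε : Fin n → ℂ)
    (hvε : ∑ i, Complex.normSq (vε i) = 1)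
    (heig : H.mulVec vε = ((hH.eigenvalues i₀ : ℝ) : ℂ) • vε) :
    Real.sqrt (∑ i, Complex.normSq
        (vε i - (∑ j, (starRingEnd ℂ) (v j) * vε j) * v i)) ≤
      2 * ε / (d - ε) :=
  perturbation_eigenvector_general H hH v w lam ε d hε hd hv hw heq i₀ hclose hfar vε hvε heig
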